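/- arXiv:0809.3011 — 2 statements merged into one kernel-verified Lean document; each statement's English description precedes it below -/
import Mathlib

section
/- (Theorem 2, upper Shimogaki index) Let ψ ∈ Ψ(a,b) and G = G(ψ; a,b), with fundamental function φ(s) = sup_{p ∈ (a,b)} s^{1/p}/ψ(p) and dilation function M_G(t) = sup_{s>0} φ(st)/φ(s). Then the upper Shimogaki index β⁺(G) = lim_{t→∞} (log M_G(t))/(log t) exists and equals 1/a. -/
noncomputable section

open MeasureTheory Filter Set Topology
open scoped ENNReal NNReal

/-- The set of exponents `p` with `a < p < b` (where `b : ℝ≥0∞` may be `∞`). -/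
def expSet (a : ℝ) (b : ℝ≥0∞) : Set ℝ := {p : ℝ | a < p ∧ ENNReal.ofReal p < b}

/-- The filter of real exponents `p` tending to `b` from below (`p → b⁻`);
when `b = ∞` this amounts to `p → ∞`. -/
def atBbelow (b : ℝ≥0∞) : Filter ℝ :=
  Filter.comap ENNReal.ofReal (nhdsWithin b (Set.Iio b))

/-- The class `EΨ(a,b)`: continuous `ψ` on `(a,b)` with `ψ(p) ≥ 1` and `ψ(b-0) = ∞`. -/
def IsEPsi (a : ℝ) (b : ℝ≥0∞) (ψ : ℝ → ℝ) : Prop :=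
  ContinuousOn ψ (expSet a b) ∧ (∀ p ∈ expSet a b, 1 ≤ ψ p) ∧
    Filter.Tendsto ψ (atBbelow b) Filter.atTop

/-- Norm of the Bilateral Grand Lebesgue space `G(ψ; a, b)` over a measure `μ`:
`‖f‖_{G(ψ)} = sup_{p ∈ (a,b)} ‖f‖_{L^p(μ)} / ψ(p)`, with values in `ℝ≥0∞`. -/
def GNorm {α : Type*} [MeasurableSpace α] (μ : Measure α) (a : ℝ) (b : ℝ≥0∞)
    (ψ : ℝ → ℝ) (f : α → ℝ) : ℝ≥0∞ :=
  ⨆ p ∈ expSet a b, eLpNorm f (ENNReal.ofReal p) μ / ENNReal.ofReal (ψ p)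

/-- The class `Ψ(a,b)` (relative to a measure `μ`): positive continuous `ψ` on `(a,b)`
with `ψ(b-0) = ∞`, admitting a representation `ψ(p) = ‖f‖_{L^p(μ)}` for `p ∈ (a,b)`, where
the measurable `f` lies in `L^p(μ)` for all `p ∈ (a,b)`. -/
def IsPsi {α : Type*} [MeasurableSpace α] (μ : Measure α) (a : ℝ) (b : ℝ≥0∞)
    (ψ : ℝ → ℝ) : Prop :=
  ContinuousOn ψ (expSet a b) ∧ (∀ p ∈ expSet a b, 0 < ψ p) ∧
    Filter.Tendsto ψ (atBbelow b) Filter.atTop ∧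
    ∃ f : α → ℝ, AEStronglyMeasurable f μ ∧
      ∀ p ∈ expSet a b, eLpNorm f (ENNReal.ofReal p) μ = ENNReal.ofReal (ψ p)

/-- The fundamental function `φ(G(ψ;a,b), s) = sup_{p ∈ (a,b)} s^{1/p}/ψ(p)`, real-valued. -/
def fundR (a : ℝ) (b : ℝ≥0∞) (ψ : ℝ → ℝ) (s : ℝ) : ℝ :=
  ⨆ p : expSet a b, s ^ (1 / (p : ℝ)) / ψ p

/-- The fundamental function `φ(G(ψ;a,b), δ) = sup_{p ∈ (a,b)} δ^{1/p}/ψ(p)`, `ℝ≥0∞`-valued. -/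
def fundE (a : ℝ) (b : ℝ≥0∞) (ψ : ℝ → ℝ) (δ : ℝ≥0∞) : ℝ≥0∞ :=
  ⨆ p ∈ expSet a b, δ ^ (1 / p) / ENNReal.ofReal (ψ p)

/-- The dilation function `M_G(t) = sup_{s > 0} φ(st)/φ(s)` built from the fundamental
function `φ(s) = sup_{p ∈ (a,b)} s^{1/p}/ψ(p)` of `G(ψ; a,b)`. -/
def MG (a : ℝ) (b : ℝ≥0∞) (ψ : ℝ → ℝ) (t : ℝ) : ℝ :=
  ⨆ s : Set.Ioi (0 : ℝ), fundR a b ψ ((s : ℝ) * t) / fundR a b ψ (s : ℝ)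

/-! By Chebyshev, `ψ(p) = ‖f‖_p ≥ ε μ{‖f‖ ≥ ε}^{1/p}`, so `ψ` is bounded below by a positive
constant on `(a,b)` and the fundamental function `φ` is finite. Since `1/p < 1/a`, for `t ≥ 1`
we get `φ(st) ≤ t^{1/a} φ(s)`, hence `M_G(t) ≤ t^{1/a}`. Conversely
`M_G(t) ≥ φ(t)/φ(1) ≥ t^{1/p} / (ψ(p) φ(1))` for each `p ∈ (a,b)`, and letting `p ↓ a` gives the
matching lower bound for `log M_G(t) / log t`. -/

open Real

section LpNormLowerBound

variable {α E : Type*} [MeasurableSpace α] {μ : Measure α} [NormedAddCommGroup E] {f : α → E}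

theorem exists_measure_setOf_le_enorm_ne_zero (hf0 : ¬ f =ᵐ[μ] 0) :
    ∃ ε : ℝ≥0, 0 < ε ∧ μ {x | (ε : ℝ≥0∞) ≤ ‖f x‖ₑ} ≠ 0 := by
  have hcover : {x | f x ≠ 0} ⊆ ⋃ n : ℕ, {x | ((1 / (n + 1) : ℝ≥0) : ℝ≥0∞) ≤ ‖f x‖ₑ} := by
    intro x hx
    obtain ⟨n, hn⟩ := exists_nat_one_div_lt (nnnorm_pos.2 hx)
    exact mem_iUnion.2 ⟨n, (ENNReal.coe_le_coe.2 hn.le).trans_eq (enorm_eq_nnnorm _).symm⟩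
  obtain ⟨n, hn⟩ := exists_measure_pos_of_not_measure_iUnion_null
    fun h ↦ hf0 (ae_iff.2 (measure_mono_null hcover h))
  exact ⟨1 / (n + 1), by positivity, hn.ne'⟩

theorem mul_measure_rpow_le_eLpNorm (hf : AEStronglyMeasurable f μ) (ε : ℝ≥0∞) {p : ℝ}
    (hp : 0 < p) :
    ε * μ {x | ε ≤ ‖f x‖ₑ} ^ (1 / p) ≤ eLpNorm f (ENNReal.ofReal p) μ := by
  rw [← ENNReal.rpow_le_rpow_iff hp, ENNReal.mul_rpow_of_nonneg _ _ hp.le,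
    ← ENNReal.rpow_mul, one_div_mul_cancel hp.ne', ENNReal.rpow_one]
  simpa [ENNReal.toReal_ofReal hp.le] using
    mul_meas_ge_le_pow_eLpNorm' μ (ENNReal.ofReal_pos.2 hp).ne' ENNReal.ofReal_ne_top hf ε

theorem exists_pos_le_eLpNorm_of_not_ae_eq_zero (hf : AEStronglyMeasurable f μ)
    (hf0 : ¬ f =ᵐ[μ] 0) {a : ℝ} (ha : 0 < a) :
    ∃ c : ℝ≥0, 0 < c ∧ ∀ p : ℝ, a ≤ p → (c : ℝ≥0∞) ≤ eLpNorm f (ENNReal.ofReal p) μ := by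
  obtain ⟨ε, hε, hA⟩ := exists_measure_setOf_le_enorm_ne_zero hf0
  set A := {x | (ε : ℝ≥0∞) ≤ ‖f x‖ₑ}
  set M : ℝ≥0∞ := min 1 (μ A ^ (1 / a))
  have hM_top : M ≠ ∞ := ne_top_of_le_ne_top ENNReal.one_ne_top (min_le_left _ _)
  have hM_pos : 0 < M :=
    lt_min one_pos (ENNReal.rpow_pos_of_nonneg (pos_iff_ne_zero.2 hA) (by positivity))
  refine ⟨ε * M.toNNReal, mul_pos hε (ENNReal.toNNReal_pos hM_pos.ne' hM_top), fun p hap ↦ ?_⟩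
  have hp : 0 < p := ha.trans_le hap
  have hM_le : M ≤ μ A ^ (1 / p) := by
    rcases le_total (μ A) 1 with h | h
    · exact (min_le_right _ _).trans
        (ENNReal.rpow_le_rpow_of_exponent_ge h (one_div_le_one_div_of_le ha hap))
    · exact (min_le_left _ _).trans (ENNReal.one_le_rpow h (by positivity))
  calc ((ε * M.toNNReal : ℝ≥0) : ℝ≥0∞) = ε * M := by
        rw [ENNReal.coe_mul, ENNReal.coe_toNNReal hM_top]
    _ ≤ ε * μ A ^ (1 / p) := by gcongr
    _ ≤ eLpNorm f (ENNReal.ofReal p) μ := mul_measure_rpow_le_eLpNorm hf ε hp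

end LpNormLowerBound

theorem tendsto_log_div_log_of_rpow_bounds {g : ℝ → ℝ} {β : ℝ}
    (hup : ∀ᶠ t in atTop, g t ≤ t ^ β)
    (hlow : ∀ γ < β, ∃ c > 0, ∀ᶠ t in atTop, c * t ^ γ ≤ g t) :
    Tendsto (fun t ↦ log (g t) / log t) atTop (𝓝 β) := by
  have hlog : ∀ᶠ t in atTop, 0 < log t := tendsto_log_atTop.eventually_gt_atTop 0
  have hg_pos : ∀ᶠ t in atTop, 0 < g t := by
    obtain ⟨c, hc, hcg⟩ := hlow (β - 1) (by linarith)
    filter_upwards [hcg, eventually_gt_atTop 0] with t ht ht0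
    exact (mul_pos hc (rpow_pos_of_pos ht0 _)).trans_le ht
  refine tendsto_order.2 ⟨fun γ hγ ↦ ?_, fun δ hδ ↦ ?_⟩
  · obtain ⟨c, hc, hcg⟩ := hlow ((γ + β) / 2) (by linarith)
    -- `log (c t^γ') / log t ≥ γ' + log c / log t → γ'`, where `γ' := (γ + β) / 2`
    have hlim : Tendsto (fun t ↦ (γ + β) / 2 + log c / log t) atTop (𝓝 ((γ + β) / 2)) := by
      simpa using (tendsto_const_nhds.div_atTop tendsto_log_atTop).const_add ((γ + β) / 2)
    filter_upwards [hlim.eventually (lt_mem_nhds (by linarith : γ < (γ + β) / 2)), hcg, hlog,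
      eventually_gt_atTop 0] with t hγt ht hlt ht0
    have hlog_g : log c + (γ + β) / 2 * log t ≤ log (g t) := by
      rw [← log_rpow ht0, ← log_mul hc.ne' (rpow_pos_of_pos ht0 _).ne']
      exact log_le_log (by positivity) ht
    refine hγt.trans_le ?_
    rw [add_div' _ _ _ hlt.ne', div_le_div_iff_of_pos_right hlt]
    linarith
  · filter_upwards [hup, hg_pos, hlog, eventually_gt_atTop 0] with t ht hgt hlt ht0
    refine lt_of_le_of_lt ?_ hδ
    rw [div_le_iff₀ hlt, ← log_rpow ht0]
    exact log_le_log hgt ht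

section Exponents

variable {a : ℝ} {b : ℝ≥0∞}

theorem eventually_mem_expSet (hab : ENNReal.ofReal a < b) : ∀ᶠ p in 𝓝[>] a, p ∈ expSet a b :=
  inter_mem self_mem_nhdsWithin
    (mem_nhdsWithin_of_mem_nhds ((isOpen_Iio.preimage ENNReal.continuous_ofReal).mem_nhds hab))

theorem expSet_nonempty (hab : ENNReal.ofReal a < b) : (expSet a b).Nonempty :=
  (eventually_mem_expSet hab).exists

theorem exists_mem_expSet_lt_one_div (ha : 0 < a) (hab : ENNReal.ofReal a < b) {γ : ℝ}
    (hγ : γ < 1 / a) : ∃ p ∈ expSet a b, γ < 1 / p := by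
  have hinv : Tendsto (fun p : ℝ ↦ 1 / p) (𝓝[>] a) (𝓝 (1 / a)) :=
    (continuousAt_const.div continuousAt_id ha.ne').tendsto.mono_left nhdsWithin_le_nhds
  exact ((eventually_mem_expSet hab).and (hinv.eventually (lt_mem_nhds hγ))).exists

end Exponents

theorem IsPsi.exists_pos_le {α : Type*} [MeasurableSpace α] {μ : Measure α} {a : ℝ}
    {b : ℝ≥0∞} {ψ : ℝ → ℝ} (hψ : IsPsi μ a b ψ) (ha : 0 < a) (hab : ENNReal.ofReal a < b) :
    ∃ m > 0, ∀ p ∈ expSet a b, m ≤ ψ p := by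
  obtain ⟨-, hψ_pos, -, f, hf, hfψ⟩ := hψ
  obtain ⟨p₀, hp₀⟩ := expSet_nonempty hab
  have hf0 : ¬ f =ᵐ[μ] 0 := by
    intro h
    have hψp₀ := hfψ p₀ hp₀
    rw [eLpNorm_congr_ae h, eLpNorm_zero, eq_comm, ENNReal.ofReal_eq_zero] at hψp₀
    exact (hψ_pos p₀ hp₀).not_ge hψp₀
  obtain ⟨c, hc, hcf⟩ := exists_pos_le_eLpNorm_of_not_ae_eq_zero hf hf0 ha
  refine ⟨c, hc, fun p hp ↦ ?_⟩
  have hcp := hcf p hp.1.le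
  rwa [hfψ p hp, ← ENNReal.ofReal_coe_nnreal,
    ENNReal.ofReal_le_ofReal_iff (hψ_pos p hp).le] at hcp

section FundamentalFunction

variable {a : ℝ} {b : ℝ≥0∞} {ψ : ℝ → ℝ} {m : ℝ}

theorem bddAbove_range_rpow_div (ha : 0 < a) (hm : 0 < m) (hψm : ∀ p ∈ expSet a b, m ≤ ψ p)
    {s : ℝ} (hs : 0 ≤ s) : BddAbove (range fun p : expSet a b ↦ s ^ (1 / (p : ℝ)) / ψ p) := by
  refine ⟨max (s ^ (1 / a)) 1 / m, forall_mem_range.2 fun p ↦ ?_⟩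
  have hnum : s ^ (1 / (p : ℝ)) ≤ max (s ^ (1 / a)) 1 := by
    rcases le_total 1 s with h | h
    · exact le_max_of_le_left
        (rpow_le_rpow_of_exponent_le h (one_div_le_one_div_of_le ha p.2.1.le))
    · exact le_max_of_le_right (rpow_le_one hs h (one_div_nonneg.2 (ha.trans p.2.1).le))
  exact div_le_div₀ (by positivity) hnum hm (hψm p p.2)

theorem rpow_div_le_fundR (ha : 0 < a) (hm : 0 < m) (hψm : ∀ p ∈ expSet a b, m ≤ ψ p)
    {s : ℝ} (hs : 0 ≤ s) (p : expSet a b) : s ^ (1 / (p : ℝ)) / ψ p ≤ fundR a b ψ s :=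
  le_ciSup (bddAbove_range_rpow_div ha hm hψm hs) p

theorem fundR_pos (ha : 0 < a) (hab : ENNReal.ofReal a < b) (hm : 0 < m)
    (hψm : ∀ p ∈ expSet a b, m ≤ ψ p) {s : ℝ} (hs : 0 < s) : 0 < fundR a b ψ s := by
  obtain ⟨p, hp⟩ := expSet_nonempty hab
  exact (div_pos (rpow_pos_of_pos hs _) (hm.trans_le (hψm p hp))).trans_le
    (rpow_div_le_fundR ha hm hψm hs.le ⟨p, hp⟩)

theorem fundR_mul_le (ha : 0 < a) (hab : ENNReal.ofReal a < b) (hm : 0 < m)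
    (hψm : ∀ p ∈ expSet a b, m ≤ ψ p) {s t : ℝ} (hs : 0 < s) (ht : 1 ≤ t) :
    fundR a b ψ (s * t) ≤ t ^ (1 / a) * fundR a b ψ s := by
  have : Nonempty (expSet a b) := (expSet_nonempty hab).to_subtype
  refine ciSup_le fun p ↦ ?_
  have hψp : 0 < ψ p := hm.trans_le (hψm p p.2)
  calc (s * t) ^ (1 / (p : ℝ)) / ψ p = t ^ (1 / (p : ℝ)) * (s ^ (1 / (p : ℝ)) / ψ p) := by
        rw [mul_rpow hs.le (zero_le_one.trans ht)]
        ring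
    _ ≤ t ^ (1 / a) * fundR a b ψ s := by
        gcongr
        · exact p.2.1.le
        · exact rpow_div_le_fundR ha hm hψm hs.le p

theorem fundR_mul_div_le (ha : 0 < a) (hab : ENNReal.ofReal a < b) (hm : 0 < m)
    (hψm : ∀ p ∈ expSet a b, m ≤ ψ p) {s t : ℝ} (hs : 0 < s) (ht : 1 ≤ t) :
    fundR a b ψ (s * t) / fundR a b ψ s ≤ t ^ (1 / a) :=
  (div_le_iff₀ (fundR_pos ha hab hm hψm hs)).2 (fundR_mul_le ha hab hm hψm hs ht)

theorem MG_le_rpow (ha : 0 < a) (hab : ENNReal.ofReal a < b) (hm : 0 < m)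
    (hψm : ∀ p ∈ expSet a b, m ≤ ψ p) {t : ℝ} (ht : 1 ≤ t) : MG a b ψ t ≤ t ^ (1 / a) :=
  ciSup_le fun s ↦ fundR_mul_div_le ha hab hm hψm s.2 ht

theorem fundR_div_fundR_one_le_MG (ha : 0 < a) (hab : ENNReal.ofReal a < b) (hm : 0 < m)
    (hψm : ∀ p ∈ expSet a b, m ≤ ψ p) {t : ℝ} (ht : 1 ≤ t) :
    fundR a b ψ t / fundR a b ψ 1 ≤ MG a b ψ t := by
  have hbdd : BddAbove (range fun s : Ioi (0 : ℝ) ↦ fundR a b ψ (s * t) / fundR a b ψ s) :=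
    ⟨t ^ (1 / a), forall_mem_range.2 fun s ↦ fundR_mul_div_le ha hab hm hψm s.2 ht⟩
  simpa [MG] using le_ciSup hbdd ⟨1, mem_Ioi.2 one_pos⟩

theorem inv_mul_rpow_le_MG (ha : 0 < a) (hab : ENNReal.ofReal a < b) (hm : 0 < m)
    (hψm : ∀ p ∈ expSet a b, m ≤ ψ p) {p : ℝ} (hp : p ∈ expSet a b) {t : ℝ} (ht : 1 ≤ t) :
    (ψ p * fundR a b ψ 1)⁻¹ * t ^ (1 / p) ≤ MG a b ψ t :=
  calc (ψ p * fundR a b ψ 1)⁻¹ * t ^ (1 / p) = t ^ (1 / p) / ψ p / fundR a b ψ 1 := by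
        rw [div_div, inv_mul_eq_div]
    _ ≤ fundR a b ψ t / fundR a b ψ 1 := by
        gcongr
        · exact (fundR_pos ha hab hm hψm one_pos).le
        · exact rpow_div_le_fundR ha hm hψm (zero_le_one.trans ht) ⟨p, hp⟩
    _ ≤ MG a b ψ t := fundR_div_fundR_one_le_MG ha hab hm hψm ht

end FundamentalFunction

/-- **Theorem 2, upper Shimogaki index.** Let `ψ ∈ Ψ(a,b)` (over `X = ℝ₊`
with Lebesgue measure) and `G = G(ψ; a,b)`. Then the upper Shimogaki index
`β⁺(G) = lim_{t→∞} log M_G(t) / log t` exists and equals `1/a`. -/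
theorem upper_Shimogaki_index
    (a : ℝ) (b : ℝ≥0∞) (ha : 1 ≤ a) (hab : ENNReal.ofReal a < b)
    (ψ : ℝ → ℝ) (hψ : IsPsi (volume.restrict (Set.Ioi (0 : ℝ))) a b ψ) :
    Tendsto (fun t : ℝ => Real.log (MG a b ψ t) / Real.log t) atTop (𝓝 (1 / a)) := by
  have ha₀ : 0 < a := one_pos.trans_le ha
  obtain ⟨m, hm, hψm⟩ := hψ.exists_pos_le ha₀ hab
  refine tendsto_log_div_log_of_rpow_bounds
    ((eventually_ge_atTop 1).mono fun t ↦ MG_le_rpow ha₀ hab hm hψm) fun γ hγ ↦ ?_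
  obtain ⟨p, hp, hγp⟩ := exists_mem_expSet_lt_one_div ha₀ hab hγ
  have hc : 0 < (ψ p * fundR a b ψ 1)⁻¹ :=
    inv_pos.2 (mul_pos (hm.trans_le (hψm p hp)) (fundR_pos ha₀ hab hm hψm one_pos))
  refine ⟨_, hc, (eventually_ge_atTop 1).mono fun t ht ↦ ?_⟩
  calc (ψ p * fundR a b ψ 1)⁻¹ * t ^ γ ≤ (ψ p * fundR a b ψ 1)⁻¹ * t ^ (1 / p) :=
        mul_le_mul_of_nonneg_left (rpow_le_rpow_of_exponent_le ht hγp.le) hc.le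
    _ ≤ MG a b ψ t := inv_mul_rpow_le_MG ha₀ hab hm hψm hp ht
end
end

section
/- (Corollary to Theorem 2, part II) Suppose the weight W on X satisfies K⁻_∞ := inf over positive vectors s with min_j s(j) ≥ 1 and y ∈ X of W(s·y)/(s^θ W(y)) (where s·y denotes coordinate-wise scaling and s^θ = ∏_r s(r)^{θ(r)}) is finite and positive. Let ψ ∈ Ψ(a,b) and ζ, ν ∈ EΨ(a,b) with ζ = ψ·ν. Then for every positive vector s with min_j s(j) > 1, ‖σ_s‖(G(ψ) → G(ζ)) ≥ min{(K⁻_∞)^{1/a}, (K⁻_∞)^{1/b}} · φ(G(ν), s^{d+θ}). -/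
noncomputable section

open MeasureTheory Filter Set Topology
open scoped ENNReal NNReal

/-- The space `X = ℝ₊^{d(1)} × ⋯ × ℝ₊^{d(k)}`, modelled as the dependent product
`∀ r : Fin k, (Fin (d r) → ℝ)`; the restriction to the positive orthant is encoded
in the measure `wMeasure` below. -/
abbrev PiX (k : ℕ) (d : Fin k → ℕ) : Type := ∀ r : Fin k, Fin (d r) → ℝ

/-- The positive orthant of `X`. -/
def orthant (k : ℕ) (d : Fin k → ℕ) : Set (PiX k d) := {x | ∀ r i, 0 < x r i}

/-- The weighted measure `μ(V) = ∫_V W(x) dx` on `X = ℝ₊^{d(1)} × ⋯ × ℝ₊^{d(k)}`. -/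
def wMeasure (k : ℕ) (d : Fin k → ℕ) (W : PiX k d → ℝ) : Measure (PiX k d) :=
  (volume.restrict (orthant k d)).withDensity fun x => ENNReal.ofReal (W x)

/-- The dilation operator `(σ_s f)(x) = f(x(d(1))/s(1), …, x(d(k))/s(k))`. -/
def dilate {k : ℕ} {d : Fin k → ℕ} (s : Fin k → ℝ) (f : PiX k d → ℝ) : PiX k d → ℝ :=
  fun x => f fun r i => x r i / s r

/-- `s^e = ∏_{r=1}^k s(r)^{e(r)}`. -/
def sPow {k : ℕ} (s e : Fin k → ℝ) : ℝ := ∏ r, s r ^ e r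

/-- The operator norm `‖σ_s‖(G(ψ) → G(ζ))` of the dilation operator. -/
def dilOpNorm {k : ℕ} {d : Fin k → ℕ} (μ : Measure (PiX k d)) (a : ℝ) (b : ℝ≥0∞)
    (ψ ζ : ℝ → ℝ) (s : Fin k → ℝ) : ℝ≥0∞ :=
  ⨆ f : {f : PiX k d → ℝ // AEStronglyMeasurable f μ},
    GNorm μ a b ζ (dilate s f.1) / GNorm μ a b ψ f.1

/-! Let `g` be a measurable representative of the function with `‖g‖_{L^p(μ)} = ψ(p)`, so that
`‖g‖_{G(ψ)} ≤ 1`. The substitution `x = s·y` multiplies Lebesgue measure by `∏ s(r)^{d(r)}`, and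
the growth bound `W(s·y) ≥ K s^θ W(y)` then shows that the image of `μ` under `x ↦ x/s` dominates
`K s^{d+θ} μ`. Hence `‖σ_s g‖_p ≥ (K s^{d+θ})^{1/p} ψ(p)`; dividing by `ζ(p) = ψ(p) ν(p)` and using
`K^{1/p} ≥ min(K^{1/a}, K^{1/b})` for `a < p < b` gives the bound exponent by exponent. -/

theorem MeasureTheory.Measure.pi_smul {ι : Type*} [Fintype ι] {α : ι → Type*}
    [∀ i, MeasurableSpace (α i)] (μ : ∀ i, Measure (α i)) [∀ i, SigmaFinite (μ i)]
    (c : ι → ℝ≥0) : Measure.pi (fun i => c i • μ i) = (∏ i, c i) • Measure.pi μ := by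
  refine Measure.pi_eq fun t _ => ?_
  simp only [Measure.smul_apply, Measure.pi_pi, ENNReal.smul_def, smul_eq_mul,
    ENNReal.ofNNReal_finsetProd, Finset.prod_mul_distrib]

theorem map_div_volume_piX {k : ℕ} {d : Fin k → ℕ} {s : Fin k → ℝ} (hs : ∀ r, 0 < s r) :
    (volume : Measure (PiX k d)).map (fun x r i => x r i / s r) =
      ENNReal.ofReal (∏ r, s r ^ d r) • volume := by
  have hblock : ∀ r, (volume : Measure (Fin (d r) → ℝ)).map (fun v i => v i / s r) =
      (s r ^ d r).toNNReal • volume := by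
    intro r
    have hv : (fun v : Fin (d r) → ℝ => fun i => v i / s r) = ((s r)⁻¹ • ·) := by
      ext v i; simp [div_eq_inv_mul]
    rw [hv, Measure.map_addHaar_smul _ (inv_ne_zero (hs r).ne'), Module.finrank_fin_fun,
      inv_pow, inv_inv, abs_of_pos (pow_pos (hs r) _)]
    rfl
  have : ∀ r, SigmaFinite ((volume : Measure (Fin (d r) → ℝ)).map (fun v i => v i / s r)) :=
    fun r => by rw [hblock r]; infer_instance
  rw [volume_pi, Measure.pi_map_pi fun r =>
    (by fun_prop : Measurable fun v : Fin (d r) → ℝ => fun i => v i / s r).aemeasurable]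
  simp only [hblock, Measure.pi_smul, ENNReal.ofReal_prod_of_nonneg fun r _ =>
    (pow_pos (hs r) _).le]
  rw [ENNReal.smul_def, ENNReal.ofNNReal_finsetProd]
  rfl

theorem measurableSet_orthant (k : ℕ) (d : Fin k → ℕ) : MeasurableSet (orthant k d) := by
  simp only [orthant, Set.ofPred_forall]
  exact .iInter fun r => .iInter fun i => measurableSet_lt measurable_const (by fun_prop)

theorem smul_withDensity_le_map_withDensity {α : Type*} [MeasurableSpace α] {ν : Measure α}
    {T D : α → α} (hT : Measurable T) (hD : Measurable D) (hDT : ∀ x, D (T x) = x)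
    {c₀ c₁ : ℝ≥0∞} (hmap : ν.map T = c₀ • ν) {ρ : α → ℝ≥0∞} (hρ : Measurable ρ)
    (hρD : ∀ y, c₁ * ρ y ≤ ρ (D y)) :
    (c₀ * c₁) • ν.withDensity ρ ≤ (ν.withDensity ρ).map T := by
  refine Measure.le_iff.2 fun A hA => ?_
  rw [Measure.map_apply hT hA, withDensity_apply _ (hT hA), Measure.smul_apply,
    withDensity_apply _ hA, smul_eq_mul]
  calc c₀ * c₁ * ∫⁻ y in A, ρ y ∂ν = c₀ * ∫⁻ y in A, c₁ * ρ y ∂ν := by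
        rw [lintegral_const_mul _ hρ, mul_assoc]
    _ ≤ c₀ * ∫⁻ y in A, ρ (D y) ∂ν := by gcongr with y; exact hρD y
    _ = ∫⁻ y in A, ρ (D y) ∂(ν.map T) := by
        rw [hmap, Measure.restrict_smul, lintegral_smul_measure, smul_eq_mul]
    _ = ∫⁻ x in T ⁻¹' A, ρ x ∂ν := by
        simp only [setLIntegral_map (f := fun y => ρ (D y)) hA (hρ.comp hD) hT, hDT]

theorem sPow_add_eq_prod_pow_mul_sPow {k : ℕ} (d : Fin k → ℕ) (θ : Fin k → ℝ) {s : Fin k → ℝ}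
    (hs : ∀ r, 0 < s r) : sPow s (fun r => (d r : ℝ) + θ r) = (∏ r, s r ^ d r) * sPow s θ := by
  simp only [sPow, ← Finset.prod_mul_distrib, Real.rpow_add (hs _), Real.rpow_natCast]

theorem smul_wMeasure_le_map_div {k : ℕ} {d : Fin k → ℕ} {θ : Fin k → ℝ} {W : PiX k d → ℝ}
    (hW : Measurable W) {K : ℝ} (hK : 0 ≤ K) {s : Fin k → ℝ} (hs : ∀ r, 0 < s r)
    (hWs : ∀ y, K * (sPow s θ * W y) ≤ W (fun r i => s r * y r i)) :
    ENNReal.ofReal (K * sPow s fun r => (d r : ℝ) + θ r) • wMeasure k d W ≤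
      (wMeasure k d W).map (fun x r i => x r i / s r) := by
  have hsθ : 0 ≤ K * sPow s θ :=
    mul_nonneg hK (Finset.prod_nonneg fun r _ => (Real.rpow_pos_of_pos (hs r) _).le)
  have hO := measurableSet_orthant k d
  have hwm : Measurable fun x => ENNReal.ofReal (W x) := hW.ennreal_ofReal
  rw [wMeasure, ← withDensity_indicator hO, sPow_add_eq_prod_pow_mul_sPow d θ hs,
    mul_left_comm, ENNReal.ofReal_mul (Finset.prod_nonneg fun r _ => (pow_pos (hs r) _).le)]
  refine smul_withDensity_le_map_withDensity (T := fun x r i => x r i / s r)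
    (D := fun y r i => s r * y r i) (by fun_prop) (by fun_prop)
    (fun x => by ext r i; exact mul_div_cancel₀ _ (hs r).ne') (map_div_volume_piX hs)
    (hwm.indicator hO) fun y => ?_
  by_cases hy : y ∈ orthant k d
  · have hsy : (fun r i => s r * y r i) ∈ orthant k d := fun r i => mul_pos (hs r) (hy r i)
    rw [indicator_of_mem hy, indicator_of_mem hsy, ← ENNReal.ofReal_mul hsθ, mul_assoc]
    exact ENNReal.ofReal_le_ofReal (hWs y)
  · simp [indicator_of_notMem hy]

theorem rpow_mul_eLpNorm_le_eLpNorm_comp {α β E : Type*} [MeasurableSpace α] [MeasurableSpace β]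
    [NormedAddCommGroup E] {μ : Measure α} {ν : Measure β} {T : α → β} (hT : AEMeasurable T μ)
    {c : ℝ≥0∞} (hc : c • ν ≤ μ.map T) {f : β → E} (hf : StronglyMeasurable f) {p : ℝ≥0∞}
    (hp : p ≠ ∞) : c ^ (1 / p).toReal * eLpNorm f p ν ≤ eLpNorm (f ∘ T) p μ :=
  calc c ^ (1 / p).toReal * eLpNorm f p ν = eLpNorm f p (c • ν) :=
        (eLpNorm_smul_measure_of_ne_top hp f c).symm
    _ ≤ eLpNorm f p (μ.map T) := eLpNorm_mono_measure f hc
    _ = eLpNorm (f ∘ T) p μ := eLpNorm_map_measure hf.aestronglyMeasurable hT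

theorem GNorm_le_one_of_eLpNorm_eq {α : Type*} [MeasurableSpace α] {μ : Measure α} {a : ℝ}
    {b : ℝ≥0∞} {ψ : ℝ → ℝ} {f : α → ℝ}
    (hf : ∀ p ∈ expSet a b, eLpNorm f (ENNReal.ofReal p) μ = ENNReal.ofReal (ψ p)) :
    GNorm μ a b ψ f ≤ 1 :=
  iSup₂_le fun p hp => by rw [hf p hp]; exact ENNReal.div_self_le_one

theorem GNorm_dilate_le_dilOpNorm {k : ℕ} {d : Fin k → ℕ} {μ : Measure (PiX k d)} {a : ℝ}
    {b : ℝ≥0∞} {ψ ζ : ℝ → ℝ} (s : Fin k → ℝ) {f : PiX k d → ℝ} (hf : AEStronglyMeasurable f μ)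
    (hf1 : GNorm μ a b ψ f ≤ 1) : GNorm μ a b ζ (dilate s f) ≤ dilOpNorm μ a b ψ ζ s :=
  calc GNorm μ a b ζ (dilate s f) = GNorm μ a b ζ (dilate s f) / 1 := (div_one _).symm
    _ ≤ GNorm μ a b ζ (dilate s f) / GNorm μ a b ψ f := ENNReal.div_le_div_left hf1 _
    _ ≤ dilOpNorm μ a b ψ ζ s := le_iSup_of_le (⟨f, hf⟩ : {f // AEStronglyMeasurable f μ}) le_rfl

theorem min_rpow_le_rpow_of_mem_expSet {K a p : ℝ} {b : ℝ≥0∞} (hK : 0 < K) (ha : 0 < a)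
    (hp : p ∈ expSet a b) : min (K ^ (1 / a)) (K ^ b⁻¹.toReal) ≤ K ^ (1 / p) := by
  have hp0 : 0 < p := ha.trans hp.1
  rcases le_total 1 K with hK1 | hK1
  · refine (min_le_right _ _).trans (Real.rpow_le_rpow_of_exponent_le hK1 ?_)
    rcases eq_or_ne b ⊤ with rfl | hb
    · simp only [ENNReal.inv_top, ENNReal.toReal_zero]; positivity
    · rw [ENNReal.toReal_inv, one_div]
      exact inv_anti₀ hp0 ((ENNReal.ofReal_lt_iff_lt_toReal hp0.le hb).1 hp.2).le
  · refine (min_le_left _ _).trans (Real.rpow_le_rpow_of_exponent_ge hK hK1 ?_)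
    simpa only [one_div] using inv_anti₀ ha hp.1.le

theorem rpow_mul_eLpNorm_le_eLpNorm_dilate {k : ℕ} {d : Fin k → ℕ} {μ : Measure (PiX k d)}
    {c : ℝ} {s : Fin k → ℝ} (hμ : ENNReal.ofReal c • μ ≤ μ.map fun x r i => x r i / s r)
    {g : PiX k d → ℝ} (hg : StronglyMeasurable g) {p : ℝ} (hp : 0 < p) :
    ENNReal.ofReal c ^ (1 / p) * eLpNorm g (ENNReal.ofReal p) μ ≤
      eLpNorm (dilate s g) (ENNReal.ofReal p) μ := by
  have hT : Measurable fun (x : PiX k d) r i => x r i / s r := by fun_prop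
  have := rpow_mul_eLpNorm_le_eLpNorm_comp hT.aemeasurable hμ hg (ENNReal.ofReal_ne_top (r := p))
  rwa [one_div, ENNReal.toReal_inv, ENNReal.toReal_ofReal hp.le, ← one_div] at this

theorem dilation_opNorm_ge_inhomogeneous_general
    (k : ℕ) (d : Fin k → ℕ) (θ : Fin k → ℝ)
    (W : PiX k d → ℝ) (hWmeas : Measurable W)
    (K : ℝ) (hK0 : 0 < K)
    (hK : ∀ s : Fin k → ℝ, (∀ r, 1 ≤ s r) → ∀ y : PiX k d,
      K * (sPow s θ * W y) ≤ W (fun r i => s r * y r i))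
    (a : ℝ) (b : ℝ≥0∞) (ha : 1 ≤ a)
    (ψ ζ ν : ℝ → ℝ) (hψ : IsPsi (wMeasure k d W) a b ψ)
    (hmul : ∀ p ∈ expSet a b, ζ p = ψ p * ν p)
    (s : Fin k → ℝ) (hs : ∀ r, 1 < s r) :
    ENNReal.ofReal (min (K ^ (1 / a)) (K ^ b⁻¹.toReal)) *
        fundE a b ν (ENNReal.ofReal (sPow s fun r => (d r : ℝ) + θ r)) ≤
      dilOpNorm (wMeasure k d W) a b ψ ζ s := by
  obtain ⟨-, hψpos, -, f, hf, hfψ⟩ := hψ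
  set μ := wMeasure k d W
  set S := sPow s fun r => (d r : ℝ) + θ r
  set g := hf.mk f
  have hgψ : ∀ p ∈ expSet a b, eLpNorm g (ENNReal.ofReal p) μ = ENNReal.ofReal (ψ p) :=
    fun p hp => (eLpNorm_congr_ae hf.ae_eq_mk).symm.trans (hfψ p hp)
  have hμ : ENNReal.ofReal (K * S) • μ ≤ μ.map fun x r i => x r i / s r :=
    smul_wMeasure_le_map_div hWmeas hK0.le (fun r => one_pos.trans (hs r)) (hK s (hs · |>.le))
  refine le_trans ?_ (GNorm_dilate_le_dilOpNorm s hf.stronglyMeasurable_mk.aestronglyMeasurable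
    (GNorm_le_one_of_eLpNorm_eq hgψ))
  simp only [fundE, ENNReal.mul_iSup]
  refine iSup₂_le fun p hp => le_iSup₂_of_le p hp ?_
  have hp0 : 0 < p := (one_pos.trans_le ha).trans hp.1
  calc ENNReal.ofReal (min (K ^ (1 / a)) (K ^ b⁻¹.toReal)) *
        (ENNReal.ofReal S ^ (1 / p) / ENNReal.ofReal (ν p))
      ≤ ENNReal.ofReal K ^ (1 / p) * (ENNReal.ofReal S ^ (1 / p) / ENNReal.ofReal (ν p)) := by
        rw [ENNReal.ofReal_rpow_of_pos hK0]
        gcongr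
        exact min_rpow_le_rpow_of_mem_expSet hK0 (one_pos.trans_le ha) hp
    _ = ENNReal.ofReal (K * S) ^ (1 / p) * ENNReal.ofReal (ψ p) / ENNReal.ofReal (ζ p) := by
        rw [hmul p hp, ENNReal.ofReal_mul (hψpos p hp).le, ENNReal.ofReal_mul hK0.le,
          ENNReal.mul_rpow_of_nonneg _ _ (by positivity), mul_comm (ENNReal.ofReal (ψ p)),
          ENNReal.mul_div_mul_right _ _ (ENNReal.ofReal_pos.2 (hψpos p hp)).ne' ENNReal.ofReal_ne_top, mul_div_assoc]
    _ ≤ eLpNorm (dilate s g) (ENNReal.ofReal p) μ / ENNReal.ofReal (ζ p) := by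
        rw [← hgψ p hp]
        gcongr
        exact rpow_mul_eLpNorm_le_eLpNorm_dilate hμ hf.stronglyMeasurable_mk hp0

/-- **Corollary to Theorem 2, part II.** Suppose the (not necessarily
homogeneous) weight `W` satisfies `K⁻_∞ · s^θ · W(y) ≤ W(s·y)` for all vectors `s` with
`min_j s(j) ≥ 1`, where `K⁻_∞` (the infimum of the ratios `W(s·y)/(s^θ W(y))`) is finite
and positive. Let `ψ ∈ Ψ(a,b)` and `ζ, ν ∈ EΨ(a,b)` with `ζ = ψ·ν`. Then for every
positive vector `s` with `min_j s(j) > 1`,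
`‖σ_s‖(G(ψ) → G(ζ)) ≥ min{(K⁻_∞)^{1/a}, (K⁻_∞)^{1/b}} · φ(G(ν), s^{d+θ})`. -/
theorem dilation_opNorm_ge_inhomogeneous
    (k : ℕ) (d : Fin k → ℕ) (θ : Fin k → ℝ)
    (W : PiX k d → ℝ) (hWnn : ∀ x, 0 ≤ W x) (hWmeas : Measurable W)
    (K : ℝ) (hK0 : 0 < K)
    (hK : ∀ s : Fin k → ℝ, (∀ r, 1 ≤ s r) → ∀ y : PiX k d,
      K * (sPow s θ * W y) ≤ W (fun r i => s r * y r i))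
    (a : ℝ) (b : ℝ≥0∞) (ha : 1 ≤ a) (hab : ENNReal.ofReal a < b)
    (ψ ζ ν : ℝ → ℝ) (hψ : IsPsi (wMeasure k d W) a b ψ)
    (hζ : IsEPsi a b ζ) (hν : IsEPsi a b ν)
    (hmul : ∀ p ∈ expSet a b, ζ p = ψ p * ν p)
    (s : Fin k → ℝ) (hs : ∀ r, 1 < s r) :
    ENNReal.ofReal (min (K ^ (1 / a)) (K ^ b⁻¹.toReal)) *
        fundE a b ν (ENNReal.ofReal (sPow s fun r => (d r : ℝ) + θ r)) ≤
      dilOpNorm (wMeasure k d W) a b ψ ζ s :=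
  dilation_opNorm_ge_inhomogeneous_general k d θ W hWmeas K hK0 hK a b ha ψ ζ ν hψ hmul s hs
end
end
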